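/- arXiv:math/0112174 — 3 statements merged into one kernel-verified Lean document; each statement's English description precedes it below -/
import Mathlib

section
/- The function s ↦ Γ(s + 1/2)/(4s√π) − Γ(s)/4, defined for real s ≠ 0 near 0, tends to −(ln 2)/2 as s → 0. -/
open Real Filter

/-!
Since `Γ(s) = Γ(s + 1)/s` and `Γ(1/2) = √π`, the function is a quarter of the difference quotient
at `0` of `H(s) = Γ(s + 1/2)/√π − Γ(s + 1)`, which vanishes at `0`. Hence the limit is `H'(0)/4`,
and `H'(0) = Γ'(1/2)/√π − Γ'(1) = −(γ + 2 log 2) + γ = −2 log 2`.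
-/

lemma hasDerivAt_Gamma_add_half_div_sqrt_pi_sub_Gamma_add_one :
    HasDerivAt (fun s : ℝ => Gamma (s + 1/2) / √π - Gamma (s + 1)) (-(2 * log 2)) 0 := by
  have hhalf : HasDerivAt (fun s : ℝ => Gamma (s + 1/2)) (-√π * (eulerMascheroniConstant +
      2 * log 2)) 0 := by
    simpa using HasDerivAt.comp_add_const (0 : ℝ) (1/2) (by simpa using hasDerivAt_Gamma_one_half)
  have hone : HasDerivAt (fun s : ℝ => Gamma (s + 1)) (-eulerMascheroniConstant) 0 := by
    simpa using HasDerivAt.comp_add_const (0 : ℝ) 1 (by simpa using hasDerivAt_Gamma_one)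
  refine ((hhalf.div_const √π).sub hone).congr_deriv ?_
  field_simp [(sqrt_pos.mpr pi_pos).ne']
  ring

/-- The function `s ↦ Γ(s + 1/2)/(4 s √π) − Γ(s)/4`, defined for real `s ≠ 0` near `0`,
tends to `−(ln 2)/2` as `s → 0`. -/
theorem stmt0 :
    Tendsto (fun s : ℝ => Real.Gamma (s + 1/2) / (4 * s * Real.sqrt π) - Real.Gamma s / 4)
      (nhdsWithin 0 {(0:ℝ)}ᶜ) (nhds (-(Real.log 2) / 2)) := by
  set H : ℝ → ℝ := fun s => Gamma (s + 1/2) / √π - Gamma (s + 1)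
  have hslope : Tendsto (fun s => slope H 0 s / 4) (nhdsWithin 0 {(0:ℝ)}ᶜ)
      (nhds (-(2 * log 2) / 4)) :=
    (hasDerivAt_iff_tendsto_slope.mp
      hasDerivAt_Gamma_add_half_div_sqrt_pi_sub_Gamma_add_one).div_const 4
  rw [show -(log 2) / 2 = -(2 * log 2) / 4 by ring]
  refine hslope.congr' (eventually_nhdsWithin_of_forall fun s (hs : s ≠ 0) => ?_)
  have hπ : √π ≠ 0 := (sqrt_pos.mpr pi_pos).ne'
  simp only [H, slope_def_field, Gamma_add_one hs, zero_add, Gamma_one_half_eq,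
    div_self hπ, Gamma_one]
  field_simp
  ring
end

section
/- Let ρ : [0,∞) → ℝ be continuously differentiable with ρ(0) = 1, and suppose there is b > 0 such that ρ(u) = 0 for all u ≥ b. Then for every λ > 0 and t > 0: ∫_0^∞ ρ(u) λ e^{2λu} erfc(u/√t + λ√t) du = (e^{−λ²t}/√(πt)) ∫_0^∞ ρ(u) e^{−u²/t} du − (1/2) erfc(λ√t) − (1/2) ∫_0^∞ ρ′(u) e^{2λu} erfc(u/√t + λ√t) du, all integrals being absolutely convergent. -/
/-!
Put `E(u) = e^{2λu} erfc(u/√t + λ√t)`. Completing the square,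
`2λu - (u/√t + λ√t)² = -λ²t - u²/t`, so `E' = 2λE - 2 e^{-λ²t} (πt)^{-1/2} e^{-u²/t}`.
Integrating `ρ E'` by parts over `(0, ∞)`, where the boundary term at infinity vanishes because
`ρ` has compact support and the one at `0` is `-ρ(0) E(0) = -erfc(λ√t)`, gives the identity
after dividing by `2`.
-/

open Real MeasureTheory Set

/-- The complementary error function `erfc(x) = (2/√π) ∫_x^∞ e^{−ξ²} dξ`. -/
noncomputable def erfc (x : ℝ) : ℝ :=
  (2 / Real.sqrt π) * ∫ ξ in Set.Ioi x, Real.exp (-ξ ^ 2)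

open Filter Topology

theorem erfc_eq_one_sub_integral (x : ℝ) :
    erfc x = 1 - 2 / √π * ∫ ξ in (0 : ℝ)..x, exp (-ξ ^ 2) := by
  have hint : Integrable fun ξ : ℝ => exp (-ξ ^ 2) := by
    simpa using integrable_exp_neg_mul_sq one_pos
  have hhalf : ∫ ξ in Ioi (0 : ℝ), exp (-ξ ^ 2) = √π / 2 := by
    simpa using integral_gaussian_Ioi 1
  have hsplit := intervalIntegral.integral_interval_add_Ioi (a := x) (b := 0)
    hint.integrableOn hint.integrableOn
  rw [erfc, ← hsplit, hhalf, intervalIntegral.integral_symm]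
  field_simp
  ring

theorem hasDerivAt_erfc (x : ℝ) : HasDerivAt erfc (-(2 / √π) * exp (-x ^ 2)) x := by
  have hgauss : Continuous fun ξ : ℝ => exp (-ξ ^ 2) := by fun_prop
  rw [funext erfc_eq_one_sub_integral]
  simpa [neg_mul] using
    ((hgauss.integral_hasStrictDerivAt 0 x).hasDerivAt.const_mul (2 / √π)).const_sub 1

@[fun_prop]
theorem continuous_erfc : Continuous erfc :=
  continuous_iff_continuousAt.2 fun x => (hasDerivAt_erfc x).continuousAt

theorem hasDerivAt_exp_mul_erfc {lam t : ℝ} (ht : 0 < t) (u : ℝ) :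
    HasDerivAt (fun u => exp (2 * lam * u) * erfc (u / √t + lam * √t))
      (2 * lam * (exp (2 * lam * u) * erfc (u / √t + lam * √t))
        - 2 * (exp (-lam ^ 2 * t) / √(π * t)) * exp (-u ^ 2 / t)) u := by
  have hexp := ((hasDerivAt_id u).const_mul (2 * lam)).exp
  have herfc := (hasDerivAt_erfc (u / √t + lam * √t)).comp u
    (((hasDerivAt_id u).div_const √t).add_const (lam * √t))
  refine (hexp.mul herfc).congr_deriv ?_
  have hsq : exp (2 * lam * u) * exp (-(u / √t + lam * √t) ^ 2)
      = exp (-lam ^ 2 * t) * exp (-u ^ 2 / t) := by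
    rw [← exp_add, ← exp_add]
    congr 1
    field_simp
    rw [sq_sqrt ht.le]
    ring
  rw [sqrt_mul pi_pos.le]
  simp only [id, mul_one, Function.comp_apply]
  linear_combination (-2 / (√π * √t)) * hsq

theorem integrableOn_Ioi_of_continuousOn_Icc_of_eq_zero {E : Type*} [NormedAddCommGroup E]
    {f : ℝ → E} {a b : ℝ} (hf : ContinuousOn f (Icc a b)) (hz : ∀ u > b, f u = 0) :
    IntegrableOn f (Ioi a) := by
  have hIoi : IntegrableOn f (Ioi b) :=
    (integrableOn_congr_fun hz measurableSet_Ioi).2 integrableOn_zero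
  refine (hf.integrableOn_Icc.union hIoi).mono_set fun u (hu : a < u) => ?_
  rcases le_or_gt u b with hub | hbu
  exacts [Or.inl ⟨hu.le, hub⟩, Or.inr hbu]

theorem derivWithin_eq_zero_of_eq_zero_of_ge {f : ℝ → ℝ} {s : Set ℝ} {b u : ℝ}
    (hz : ∀ x ≥ b, f x = 0) (hu : b < u) : derivWithin f s u = 0 := by
  have : f =ᶠ[𝓝 u] fun _ => 0 :=
    eventually_of_mem (Ioi_mem_nhds hu) fun x hx => hz x (le_of_lt hx)
  rw [this.derivWithin_eq_of_nhds, derivWithin_fun_const, Pi.zero_apply]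

theorem integral_Ioi_mul_deriv_of_eq_zero_of_ge {ρ F F' : ℝ → ℝ} {a b : ℝ}
    (hρ : ContDiffOn ℝ 1 ρ (Ici a)) (hz : ∀ u ≥ b, ρ u = 0)
    (hF : ∀ u, HasDerivAt F (F' u) u) (hF' : Continuous F') :
    ∫ u in Ioi a, ρ u * F' u = -(ρ a * F a) - ∫ u in Ioi a, derivWithin ρ (Ici a) u * F u := by
  have hFc : Continuous F := continuous_iff_continuousAt.2 fun u => (hF u).continuousAt
  have hρc := hρ.continuousOn
  have hρ'c := hρ.continuousOn_derivWithin (uniqueDiffOn_Ici a) le_rfl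
  have hρ' : ∀ u ∈ Ioi a, HasDerivAt ρ (derivWithin ρ (Ici a) u) u := fun u (hu : a < u) =>
    ((hρ.differentiableOn one_ne_zero u hu.le).hasDerivWithinAt).hasDerivAt (Ici_mem_nhds hu)
  have := integral_Ioi_mul_deriv_eq_deriv_mul hρ' (fun u _ => hF u)
    (integrableOn_Ioi_of_continuousOn_Icc_of_eq_zero (b := b)
      ((hρc.mono Icc_subset_Ici_self).mul hF'.continuousOn) fun u hu => by simp [hz u hu.le])
    (integrableOn_Ioi_of_continuousOn_Icc_of_eq_zero (b := b)
      ((hρ'c.mono Icc_subset_Ici_self).mul hFc.continuousOn)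
      fun u hu => by simp [derivWithin_eq_zero_of_eq_zero_of_ge hz hu])
    (((hρc.mul hFc.continuousOn) a self_mem_Ici).mono Ioi_subset_Ici_self)
    (tendsto_nhds_of_eventually_eq (f := ρ * F) (x := 0) <|
      (eventually_ge_atTop b).mono fun u hu => by simp [hz u hu])
  simpa using this

theorem stmt3_general (ρ : ℝ → ℝ) (hρ : ContDiffOn ℝ 1 ρ (Set.Ici 0)) (hρ0 : ρ 0 = 1)
    (hb : ∃ b > (0:ℝ), ∀ u ≥ b, ρ u = 0)
    (lam t : ℝ) (ht : 0 < t) :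
    IntegrableOn (fun u : ℝ =>
        ρ u * (lam * Real.exp (2*lam*u) * erfc (u / Real.sqrt t + lam * Real.sqrt t)))
      (Set.Ioi 0) ∧
    IntegrableOn (fun u : ℝ => ρ u * Real.exp (-u^2/t)) (Set.Ioi 0) ∧
    IntegrableOn (fun u : ℝ =>
        derivWithin ρ (Set.Ici 0) u *
          (Real.exp (2*lam*u) * erfc (u / Real.sqrt t + lam * Real.sqrt t)))
      (Set.Ioi 0) ∧
    (∫ u in Set.Ioi (0:ℝ),
        ρ u * (lam * Real.exp (2*lam*u) * erfc (u / Real.sqrt t + lam * Real.sqrt t)))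
      = (Real.exp (-lam^2*t) / Real.sqrt (π*t)) * (∫ u in Set.Ioi (0:ℝ), ρ u * Real.exp (-u^2/t))
        - (1/2) * erfc (lam * Real.sqrt t)
        - (1/2) * ∫ u in Set.Ioi (0:ℝ),
            derivWithin ρ (Set.Ici 0) u *
              (Real.exp (2*lam*u) * erfc (u / Real.sqrt t + lam * Real.sqrt t)) := by
  obtain ⟨b, -, hbz⟩ := hb
  have hρc := hρ.continuousOn.mono (Icc_subset_Ici_self : Icc 0 b ⊆ Ici 0)
  have hρ'c := (hρ.continuousOn_derivWithin (uniqueDiffOn_Ici 0) le_rfl).mono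
    (Icc_subset_Ici_self : Icc 0 b ⊆ Ici 0)
  have h1 : IntegrableOn
      (fun u => ρ u * (lam * exp (2 * lam * u) * erfc (u / √t + lam * √t))) (Ioi 0) :=
    integrableOn_Ioi_of_continuousOn_Icc_of_eq_zero (hρc.mul (by fun_prop))
      fun u hu => by simp [hbz u hu.le]
  have h2 : IntegrableOn (fun u => ρ u * exp (-u ^ 2 / t)) (Ioi 0) :=
    integrableOn_Ioi_of_continuousOn_Icc_of_eq_zero (hρc.mul (by fun_prop))
      fun u hu => by simp [hbz u hu.le]
  have h3 : IntegrableOn (fun u => derivWithin ρ (Ici 0) u *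
      (exp (2 * lam * u) * erfc (u / √t + lam * √t))) (Ioi 0) :=
    integrableOn_Ioi_of_continuousOn_Icc_of_eq_zero (hρ'c.mul (by fun_prop))
      fun u hu => by simp [derivWithin_eq_zero_of_eq_zero_of_ge hbz hu]
  have ibp := integral_Ioi_mul_deriv_of_eq_zero_of_ge hρ hbz
    (hasDerivAt_exp_mul_erfc (lam := lam) ht) (by fun_prop)
  refine ⟨h1, h2, h3, ?_⟩
  set A := exp (-lam ^ 2 * t) / √(π * t)
  have hsplit : ∫ u in Ioi 0, ρ u * (2 * lam * (exp (2 * lam * u) * erfc (u / √t + lam * √t))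
        - 2 * A * exp (-u ^ 2 / t))
      = 2 * (∫ u in Ioi 0, ρ u * (lam * exp (2 * lam * u) * erfc (u / √t + lam * √t)))
        - 2 * A * ∫ u in Ioi 0, ρ u * exp (-u ^ 2 / t) := by
    rw [← integral_const_mul, ← integral_const_mul, ← integral_sub (h1.const_mul 2)
      (h2.const_mul _)]
    congr 1 with u
    ring
  simp only [hsplit, hρ0, mul_zero, zero_div, zero_add, exp_zero, one_mul] at ibp
  linarith

/-- Integration by parts identity for the single-eigenvalue cylinder contribution:
for `ρ : [0,∞) → ℝ` continuously differentiable with `ρ(0) = 1` and `ρ(u) = 0` for `u ≥ b`,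
and every `λ > 0`, `t > 0`:
`∫_0^∞ ρ(u) λ e^{2λu} erfc(u/√t + λ√t) du
  = (e^{−λ²t}/√(πt)) ∫_0^∞ ρ(u) e^{−u²/t} du − (1/2) erfc(λ√t)
    − (1/2) ∫_0^∞ ρ′(u) e^{2λu} erfc(u/√t + λ√t) du`,
with all integrals absolutely convergent. -/
theorem stmt3 (ρ : ℝ → ℝ) (hρ : ContDiffOn ℝ 1 ρ (Set.Ici 0)) (hρ0 : ρ 0 = 1)
    (hb : ∃ b > (0:ℝ), ∀ u ≥ b, ρ u = 0)
    (lam t : ℝ) (hlam : 0 < lam) (ht : 0 < t) :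
    IntegrableOn (fun u : ℝ =>
        ρ u * (lam * Real.exp (2*lam*u) * erfc (u / Real.sqrt t + lam * Real.sqrt t)))
      (Set.Ioi 0) ∧
    IntegrableOn (fun u : ℝ => ρ u * Real.exp (-u^2/t)) (Set.Ioi 0) ∧
    IntegrableOn (fun u : ℝ =>
        derivWithin ρ (Set.Ici 0) u *
          (Real.exp (2*lam*u) * erfc (u / Real.sqrt t + lam * Real.sqrt t)))
      (Set.Ioi 0) ∧
    (∫ u in Set.Ioi (0:ℝ),
        ρ u * (lam * Real.exp (2*lam*u) * erfc (u / Real.sqrt t + lam * Real.sqrt t)))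
      = (Real.exp (-lam^2*t) / Real.sqrt (π*t)) * (∫ u in Set.Ioi (0:ℝ), ρ u * Real.exp (-u^2/t))
        - (1/2) * erfc (lam * Real.sqrt t)
        - (1/2) * ∫ u in Set.Ioi (0:ℝ),
            derivWithin ρ (Set.Ici 0) u *
              (Real.exp (2*lam*u) * erfc (u / Real.sqrt t + lam * Real.sqrt t)) :=
  stmt3_general ρ hρ hρ0 hb lam t ht
end

section
/- Let c > 0 and for each R > 0 let φ_R : [0,∞) → [0,1] be continuously differentiable with φ_R(u) = 1 for 0 ≤ u ≤ R, φ_R(u) = 0 for u ≥ 2R, and |φ_R′(u)| ≤ c/R for all u. Then for every real s the double integral T₂(s,R) = (1/2) ∫_0^∞ t^{s−1} ( ∫_0^∞ φ_R′(u) Σ_{n=1}^∞ e^{2λ_n u} erfc(u/√t + λ_n√t) du ) dt converges absolutely and lim_{R→∞} T₂(s,R) = 0. -/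
/-!
Completing the square, `2λu − (u/√t + λ√t)² = −u²/t − tλ²`, together with `erfc x ≤ e^{−x²}`
for `x ≥ 0` bounds the series by `e^{−u²/t} Θ(t)`. Since `φ_R′` vanishes off `[R, 2R]` and is
at most `c/R`, the integrand is dominated by `(c/R) 1_{[R,2R]}(u) t^{s−1} e^{−R²/t} Θ(t)`, whose
integral is `c ∫₀^∞ t^{s−1} e^{−R²/t} Θ(t) dt`. This integral is finite: near `0` the factor
`e^{−R²/t}` beats the polynomial blow-up `Θ(t) ≤ C t^{−k}`, and near `∞`
`Θ(t) ≤ e^{−(t−1)λ₁²} Θ(1)` decays exponentially. It tends to `0` as `R → ∞` by dominated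
convergence.
-/

open Real MeasureTheory Set Filter

lemma integral_Ioi_comp_sub_right {E : Type*} [NormedAddCommGroup E] [NormedSpace ℝ E]
    (f : ℝ → E) (x : ℝ) : ∫ ξ in Ioi x, f (ξ - x) = ∫ y in Ioi 0, f y := by
  have h := (measurePreserving_sub_right volume x).setIntegral_preimage_emb
    (measurableEmbedding_subRight x) f (Ioi 0)
  rwa [preimage_sub_const_Ioi, zero_add] at h

lemma integrable_exp_neg_sq : Integrable fun x : ℝ => exp (-x ^ 2) := by
  simpa using integrable_exp_neg_mul_sq one_pos

lemma erfc_nonneg (x : ℝ) : 0 ≤ erfc x :=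
  mul_nonneg (by positivity) (integral_nonneg fun _ => (exp_pos _).le)

lemma erfc_antitone : Antitone erfc := fun a b hab =>
  mul_le_mul_of_nonneg_left (setIntegral_mono_set integrable_exp_neg_sq.integrableOn
    (.of_forall fun _ => (exp_pos _).le) (Ioi_subset_Ioi hab).eventuallyLE) (by positivity)

lemma measurable_erfc : Measurable erfc := erfc_antitone.measurable

lemma erfc_le_exp_neg_sq {x : ℝ} (hx : 0 ≤ x) : erfc x ≤ exp (-x ^ 2) := by
  have hsplit : ∀ ξ ∈ Ioi x, exp (-ξ ^ 2) ≤ exp (-x ^ 2) * exp (-(ξ - x) ^ 2) := by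
    intro ξ hξ
    rw [← exp_add]
    exact exp_le_exp.2 (by nlinarith [mem_Ioi.1 hξ])
  have hshift : ∫ ξ in Ioi x, exp (-(ξ - x) ^ 2) = √π / 2 := by
    rw [integral_Ioi_comp_sub_right (fun y => exp (-y ^ 2))]
    simpa using integral_gaussian_Ioi 1
  have hint : IntegrableOn (fun ξ => exp (-x ^ 2) * exp (-(ξ - x) ^ 2)) (Ioi x) :=
    ((integrable_exp_neg_sq.comp_sub_right x).const_mul _).integrableOn
  calc erfc x ≤ 2 / √π * ∫ ξ in Ioi x, exp (-x ^ 2) * exp (-(ξ - x) ^ 2) :=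
        mul_le_mul_of_nonneg_left (setIntegral_mono_on integrable_exp_neg_sq.integrableOn hint
          measurableSet_Ioi hsplit) (by positivity)
    _ = exp (-x ^ 2) := by
        rw [integral_const_mul, hshift]
        field_simp

lemma exp_mul_erfc_le {lam t u : ℝ} (hlam : 0 ≤ lam) (ht : 0 < t) (hu : 0 ≤ u) :
    exp (2 * lam * u) * erfc (u / √t + lam * √t) ≤ exp (-u ^ 2 / t) * exp (-t * lam ^ 2) := by
  obtain ⟨r, hr, rfl⟩ : ∃ r, 0 < r ∧ t = r ^ 2 :=
    ⟨√t, sqrt_pos.2 ht, (sq_sqrt ht.le).symm⟩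
  rw [sqrt_sq hr.le]
  calc exp (2 * lam * u) * erfc (u / r + lam * r)
      ≤ exp (2 * lam * u) * exp (-(u / r + lam * r) ^ 2) := by
        gcongr
        exact erfc_le_exp_neg_sq (by positivity)
    _ = exp (-u ^ 2 / r ^ 2) * exp (-r ^ 2 * lam ^ 2) := by
        rw [← exp_add, ← exp_add]
        congr 1
        field_simp
        ring

noncomputable def heatTrace (l : ℕ → ℝ) (t : ℝ) : ℝ := ∑' n, exp (-t * l n ^ 2)

noncomputable def erfcSeries (l : ℕ → ℝ) (t u : ℝ) : ℝ :=
  ∑' n, exp (2 * l n * u) * erfc (u / √t + l n * √t)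

lemma heatTrace_nonneg (l : ℕ → ℝ) (t : ℝ) : 0 ≤ heatTrace l t :=
  tsum_nonneg fun _ => (exp_pos _).le

lemma erfcSeries_nonneg (l : ℕ → ℝ) (t u : ℝ) : 0 ≤ erfcSeries l t u :=
  tsum_nonneg fun _ => mul_nonneg (exp_pos _).le (erfc_nonneg _)

section Series

variable {l : ℕ → ℝ}

lemma heatTrace_le_exp_mul_heatTrace {b t₀ t : ℝ} (hb : ∀ n, b ≤ l n ^ 2) (ht : t₀ ≤ t)
    (hs₀ : Summable fun n => exp (-t₀ * l n ^ 2)) (hs : Summable fun n => exp (-t * l n ^ 2)) :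
    heatTrace l t ≤ exp (-(t - t₀) * b) * heatTrace l t₀ := by
  refine (hs.tsum_le_tsum (fun n => ?_) (hs₀.mul_left _)).trans_eq tsum_mul_left
  rw [← exp_add]
  exact exp_le_exp.2 (by nlinarith [mul_le_mul_of_nonneg_left (hb n) (sub_nonneg.2 ht)])

variable {t u : ℝ}

lemma summable_erfcSeries (hl : ∀ n, 0 ≤ l n) (ht : 0 < t) (hu : 0 ≤ u)
    (hs : Summable fun n => exp (-t * l n ^ 2)) :
    Summable fun n => exp (2 * l n * u) * erfc (u / √t + l n * √t) :=
  (hs.mul_left (exp (-u ^ 2 / t))).of_nonneg_of_le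
    (fun _ => mul_nonneg (exp_pos _).le (erfc_nonneg _)) fun n => exp_mul_erfc_le (hl n) ht hu

lemma erfcSeries_le (hl : ∀ n, 0 ≤ l n) (ht : 0 < t) (hu : 0 ≤ u)
    (hs : Summable fun n => exp (-t * l n ^ 2)) :
    erfcSeries l t u ≤ exp (-u ^ 2 / t) * heatTrace l t :=
  ((summable_erfcSeries hl ht hu hs).tsum_le_tsum (fun n => exp_mul_erfc_le (hl n) ht hu)
    (hs.mul_left _)).trans_eq tsum_mul_left

end Series

lemma aestronglyMeasurable_tsum {α : Type*} [MeasurableSpace α] {μ : Measure α}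
    {f : ℕ → α → ℝ} (hf : ∀ n, Measurable (f n))
    (hs : ∀ᵐ x ∂μ, Summable fun n => f n x) :
    AEStronglyMeasurable (fun x => ∑' n, f n x) μ :=
  aestronglyMeasurable_of_tendsto_ae atTop
    (fun _ => (Finset.measurable_sum _ fun n _ => hf n).aestronglyMeasurable)
    (hs.mono fun _ hx => hx.hasSum.tendsto_sum_nat)

lemma aestronglyMeasurable_heatTrace {l : ℕ → ℝ}
    (hs : ∀ t, 0 < t → Summable fun n => exp (-t * l n ^ 2)) :
    AEStronglyMeasurable (heatTrace l) (volume.restrict (Ioi 0)) :=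
  aestronglyMeasurable_tsum (fun _ => by fun_prop) <| (ae_restrict_mem measurableSet_Ioi).mono hs

lemma aestronglyMeasurable_erfcSeries {l : ℕ → ℝ} (hl : ∀ n, 0 ≤ l n)
    (hs : ∀ t, 0 < t → Summable fun n => exp (-t * l n ^ 2)) :
    AEStronglyMeasurable (fun p : ℝ × ℝ => erfcSeries l p.1 p.2)
      (volume.restrict (Ioi 0 ×ˢ Ioi 0)) :=
  aestronglyMeasurable_tsum (fun _ => by
      have := measurable_erfc
      fun_prop)
    ((ae_restrict_mem (measurableSet_Ioi.prod measurableSet_Ioi)).mono fun p hp =>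
      summable_erfcSeries hl hp.1 (le_of_lt hp.2) (hs _ hp.1))

lemma aestronglyMeasurable_derivWithin_Ici_restrict_Ioi (f : ℝ → ℝ) (a : ℝ) :
    AEStronglyMeasurable (derivWithin f (Ici a)) (volume.restrict (Ioi a)) :=
  (measurable_deriv f).aestronglyMeasurable.congr <|
    (ae_restrict_mem measurableSet_Ioi).mono fun _ hx =>
      (derivWithin_of_mem_nhds (Ici_mem_nhds hx)).symm

section Cutoff

variable {φ : ℝ → ℝ} {a b u : ℝ}

lemma derivWithin_Ici_eq_zero_of_notMem_Icc (h1 : ∀ v, 0 ≤ v → v ≤ a → φ v = 1)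
    (h0 : ∀ v, b ≤ v → φ v = 0) (hu : 0 < u) (hu' : u ∉ Icc a b) :
    derivWithin φ (Ici 0) u = 0 := by
  rw [derivWithin_of_mem_nhds (Ici_mem_nhds hu)]
  rcases not_and_or.1 hu' with hua | hub
  · have hφ : φ =ᶠ[nhds u] fun _ => 1 :=
      eventually_of_mem (Ioo_mem_nhds hu (not_le.1 hua)) fun v hv => h1 v hv.1.le hv.2.le
    rw [hφ.deriv_eq, deriv_const]
  · have hφ : φ =ᶠ[nhds u] fun _ => 0 :=
      eventually_of_mem (Ioi_mem_nhds (not_le.1 hub)) fun v hv => h0 v (le_of_lt hv)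
    rw [hφ.deriv_eq, deriv_const]

lemma abs_derivWithin_Ici_le_indicator {M : ℝ} (h1 : ∀ v, 0 ≤ v → v ≤ a → φ v = 1)
    (h0 : ∀ v, b ≤ v → φ v = 0) (hM : ∀ v, 0 ≤ v → |derivWithin φ (Ici 0) v| ≤ M)
    (hu : 0 < u) : |derivWithin φ (Ici 0) u| ≤ (Icc a b).indicator (fun _ => M) u := by
  by_cases hmem : u ∈ Icc a b
  · rw [indicator_of_mem hmem]
    exact hM u hu.le
  · rw [indicator_of_notMem hmem, derivWithin_Ici_eq_zero_of_notMem_Icc h1 h0 hu hmem, abs_zero]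

end Cutoff

section WeightedIntegral

variable {g : ℝ → ℝ} {s a : ℝ}

lemma exp_neg_div_le_factorial_mul_pow {t : ℝ} (ha : 0 < a) (ht : 0 < t) (m : ℕ) :
    exp (-a / t) ≤ m.factorial * (t / a) ^ m := by
  have hpos : 0 < (a / t) ^ m / m.factorial := by positivity
  calc exp (-a / t) = (exp (a / t))⁻¹ := by rw [neg_div, exp_neg]
    _ ≤ ((a / t) ^ m / m.factorial)⁻¹ :=
        inv_anti₀ hpos (pow_div_factorial_le_exp _ (by positivity) m)
    _ = m.factorial * (t / a) ^ m := by rw [inv_div, div_pow, div_pow]; field_simp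

lemma measurable_rpow_mul_exp_neg_div (s a : ℝ) :
    Measurable fun t : ℝ => t ^ (s - 1) * exp (-a / t) := by
  fun_prop

lemma integrableOn_Ioc_rpow_mul_exp_neg_div_mul {C k : ℝ}
    (hg : AEStronglyMeasurable g (volume.restrict (Ioc 0 1))) (hg0 : ∀ t ∈ Ioc 0 1, 0 ≤ g t)
    (hgC : ∀ t ∈ Ioc 0 1, g t ≤ C * t ^ (-k)) (ha : 0 < a) :
    IntegrableOn (fun t => t ^ (s - 1) * exp (-a / t) * g t) (Ioc 0 1) := by
  obtain ⟨m, hm⟩ := exists_nat_ge (k + 1 - s)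
  have hC : 0 ≤ C := by
    simpa using (hg0 1 ⟨one_pos, le_rfl⟩).trans (hgC 1 ⟨one_pos, le_rfl⟩)
  refine Integrable.mono' (integrableOn_const (C := C * m.factorial / a ^ m)
    measure_Ioc_lt_top.ne) ((measurable_rpow_mul_exp_neg_div s a).aestronglyMeasurable.mul hg) ?_
  filter_upwards [ae_restrict_mem measurableSet_Ioc] with t ⟨ht0, ht1⟩
  have hpow : t ^ (s - 1) * t ^ m * t ^ (-k) ≤ 1 := by
    rw [← rpow_natCast, ← rpow_add ht0, ← rpow_add ht0]
    exact rpow_le_one ht0.le ht1 (by linarith)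
  have hgt := hg0 t ⟨ht0, ht1⟩
  rw [norm_of_nonneg (by positivity : 0 ≤ t ^ (s - 1) * exp (-a / t) * g t)]
  calc t ^ (s - 1) * exp (-a / t) * g t
      ≤ t ^ (s - 1) * (m.factorial * (t / a) ^ m) * (C * t ^ (-k)) := by
        gcongr
        · exact exp_neg_div_le_factorial_mul_pow ha ht0 m
        · exact hgC t ⟨ht0, ht1⟩
    _ = C * m.factorial / a ^ m * (t ^ (s - 1) * t ^ m * t ^ (-k)) := by ring
    _ ≤ C * m.factorial / a ^ m := mul_le_of_le_one_right (by positivity) hpow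

lemma integrableOn_Ioi_one_rpow_mul_exp_neg_div_mul {K b : ℝ}
    (hg : AEStronglyMeasurable g (volume.restrict (Ioi 1))) (hg0 : ∀ t ∈ Ioi 1, 0 ≤ g t)
    (hgK : ∀ t ∈ Ioi 1, g t ≤ K * exp (-b * t)) (hb : 0 < b) (ha : 0 ≤ a) :
    IntegrableOn (fun t => t ^ (s - 1) * exp (-a / t) * g t) (Ioi 1) := by
  have hdom : IntegrableOn (fun t : ℝ => K * (t ^ max (s - 1) 0 * exp (-b * t))) (Ioi 1) := by
    have := integrableOn_rpow_mul_exp_neg_mul_rpow (s := max (s - 1) 0)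
      (by linarith [le_max_right (s - 1) 0]) one_pos hb
    simp only [rpow_one] at this
    exact (this.mono_set (Ioi_subset_Ioi zero_le_one)).const_mul K
  refine hdom.mono' ((measurable_rpow_mul_exp_neg_div s a).aestronglyMeasurable.mul hg) ?_
  filter_upwards [ae_restrict_mem measurableSet_Ioi] with t ht
  have ht0 : 0 < t := one_pos.trans ht
  have hgt := hg0 t ht
  rw [norm_of_nonneg (by positivity : 0 ≤ t ^ (s - 1) * exp (-a / t) * g t)]
  calc t ^ (s - 1) * exp (-a / t) * g t ≤ t ^ max (s - 1) 0 * 1 * (K * exp (-b * t)) := by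
        gcongr
        · exact le_of_lt ht
        · exact le_max_left _ _
        · exact exp_le_one_iff.2 (div_nonpos_of_nonpos_of_nonneg (neg_nonpos.2 ha) ht0.le)
        · exact hgK t ht
    _ = K * (t ^ max (s - 1) 0 * exp (-b * t)) := by ring

lemma tendsto_integral_rpow_mul_exp_neg_div_mul (hg0 : ∀ t ∈ Ioi 0, 0 ≤ g t)
    (hint : ∀ a, 0 < a → IntegrableOn (fun t => t ^ (s - 1) * exp (-a / t) * g t) (Ioi 0)) :
    Tendsto (fun a => ∫ t in Ioi 0, t ^ (s - 1) * exp (-a / t) * g t) atTop (nhds 0) := by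
  have hlim : ∀ t ∈ Ioi (0 : ℝ),
      Tendsto (fun a => t ^ (s - 1) * exp (-a / t) * g t) atTop (nhds 0) := fun t ht => by
    have : Tendsto (fun a => exp (-a / t)) atTop (nhds 0) :=
      tendsto_exp_atBot.comp <| (tendsto_neg_atTop_atBot.atBot_div_const ht)
    simpa using (this.const_mul (t ^ (s - 1))).mul_const (g t)
  have hdom : ∀ᶠ a in atTop, ∀ᵐ t ∂(volume.restrict (Ioi 0)),
      ‖t ^ (s - 1) * exp (-a / t) * g t‖ ≤ t ^ (s - 1) * exp (-1 / t) * g t := by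
    filter_upwards [eventually_ge_atTop 1] with a ha
    filter_upwards [ae_restrict_mem measurableSet_Ioi] with t (ht : 0 < t)
    have hgt := hg0 t ht
    rw [norm_of_nonneg (by positivity : 0 ≤ t ^ (s - 1) * exp (-a / t) * g t)]
    gcongr
  simpa using tendsto_integral_filter_of_dominated_convergence _
    ((eventually_gt_atTop 0).mono fun a ha => (hint a ha).aestronglyMeasurable) hdom
    (hint 1 one_pos) ((ae_restrict_mem measurableSet_Ioi).mono hlim)

end WeightedIntegral

lemma integrableOn_rpow_mul_exp_neg_div_mul_heatTrace {l : ℕ → ℝ} {C k s a : ℝ}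
    (hl0 : 0 < l 0) (hl : ∀ n, l 0 ≤ l n)
    (hs : ∀ t, 0 < t → Summable fun n => exp (-t * l n ^ 2))
    (hΘ : ∀ t, 0 < t → t ≤ 1 → heatTrace l t ≤ C * t ^ (-k)) (ha : 0 < a) :
    IntegrableOn (fun t => t ^ (s - 1) * exp (-a / t) * heatTrace l t) (Ioi 0) := by
  have hmeas := aestronglyMeasurable_heatTrace hs
  have hsq : ∀ n, l 0 ^ 2 ≤ l n ^ 2 := fun n => pow_le_pow_left₀ hl0.le (hl n) 2
  rw [← Ioc_union_Ioi_eq_Ioi zero_le_one]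
  refine (integrableOn_Ioc_rpow_mul_exp_neg_div_mul
    (hmeas.mono_measure (Measure.restrict_mono Ioc_subset_Ioi_self le_rfl))
    (fun t _ => heatTrace_nonneg l t) (fun t ht => hΘ t ht.1 ht.2) ha).union
    (integrableOn_Ioi_one_rpow_mul_exp_neg_div_mul
    (K := exp (l 0 ^ 2) * heatTrace l 1) (b := l 0 ^ 2)
    (hmeas.mono_measure (Measure.restrict_mono (Ioi_subset_Ioi zero_le_one) le_rfl))
    (fun t _ => heatTrace_nonneg l t) (fun t ht => ?_) (by positivity) ha.le)
  calc heatTrace l t ≤ exp (-(t - 1) * l 0 ^ 2) * heatTrace l 1 :=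
        heatTrace_le_exp_mul_heatTrace hsq (le_of_lt ht) (hs 1 one_pos) (hs t (one_pos.trans ht))
    _ = exp (l 0 ^ 2) * heatTrace l 1 * exp (-l 0 ^ 2 * t) := by
        rw [mul_right_comm, ← exp_add]
        ring_nf

section DoubleIntegral

variable {l : ℕ → ℝ} {d : ℝ → ℝ} {a b M s : ℝ}

lemma norm_mul_erfcSeries_le {t u : ℝ} (hl : ∀ n, 0 ≤ l n)
    (hs : Summable fun n => exp (-t * l n ^ 2)) (ha : 0 ≤ a)
    (hd : |d u| ≤ (Icc a b).indicator (fun _ => M) u) (ht : 0 < t) (hu : 0 < u) :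
    ‖d u * erfcSeries l t u‖ ≤
      (Icc a b).indicator (fun _ => M) u * (exp (-a ^ 2 / t) * heatTrace l t) := by
  by_cases hmem : u ∈ Icc a b
  · have hsq : a ^ 2 ≤ u ^ 2 := pow_le_pow_left₀ ha hmem.1 2
    rw [norm_mul, norm_of_nonneg (erfcSeries_nonneg l t u)]
    refine mul_le_mul hd ((erfcSeries_le hl ht hu.le hs).trans ?_) (erfcSeries_nonneg l t u)
      ((abs_nonneg _).trans hd)
    gcongr
    exact heatTrace_nonneg l t
  · rw [indicator_of_notMem hmem] at hd ⊢
    rw [abs_nonpos_iff.1 hd, zero_mul, norm_zero, zero_mul]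

lemma integrableOn_indicator_Icc_const (a b M : ℝ) :
    IntegrableOn ((Icc a b).indicator fun _ => M) (Ioi 0) :=
  ((integrable_indicator_iff measurableSet_Icc).2
    (integrableOn_const measure_Icc_lt_top.ne)).integrableOn

lemma integrableOn_rpow_mul_mul_erfcSeries (hl : ∀ n, 0 ≤ l n)
    (hs : ∀ t, 0 < t → Summable fun n => exp (-t * l n ^ 2)) (ha : 0 ≤ a)
    (hd_meas : AEStronglyMeasurable d (volume.restrict (Ioi 0)))
    (hd : ∀ u, 0 < u → |d u| ≤ (Icc a b).indicator (fun _ => M) u)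
    (hint : IntegrableOn (fun t => t ^ (s - 1) * exp (-a ^ 2 / t) * heatTrace l t) (Ioi 0)) :
    IntegrableOn (fun p : ℝ × ℝ => p.1 ^ (s - 1) * (d p.2 * erfcSeries l p.1 p.2))
      (Ioi 0 ×ˢ Ioi 0) := by
  have hμ : (volume.restrict (Ioi 0)).prod (volume.restrict (Ioi 0)) =
      volume.restrict (Ioi 0 ×ˢ Ioi 0 : Set (ℝ × ℝ)) := by
    rw [Measure.prod_restrict, Measure.volume_eq_prod]
  have hdom := hint.mul_prod (integrableOn_indicator_Icc_const a b M)
  rw [hμ] at hdom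
  have hd_meas' := hd_meas.comp_snd (μ := volume.restrict (Ioi (0 : ℝ)))
  rw [hμ] at hd_meas'
  refine hdom.mono' (((measurable_fst.pow_const _).aestronglyMeasurable.mul
    (hd_meas'.mul (aestronglyMeasurable_erfcSeries hl hs)))) ?_
  filter_upwards [ae_restrict_mem (measurableSet_Ioi.prod measurableSet_Ioi)] with p ⟨ht, hu⟩
  rw [norm_mul, norm_of_nonneg (rpow_nonneg (le_of_lt ht) _)]
  calc p.1 ^ (s - 1) * ‖d p.2 * erfcSeries l p.1 p.2‖
      ≤ p.1 ^ (s - 1) * ((Icc a b).indicator (fun _ => M) p.2 *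
          (exp (-a ^ 2 / p.1) * heatTrace l p.1)) :=
        mul_le_mul_of_nonneg_left (norm_mul_erfcSeries_le hl (hs _ ht) ha (hd _ hu) ht hu)
          (rpow_nonneg (le_of_lt ht) _)
    _ = _ := by ring

lemma integral_indicator_Icc_const_Ioi (hab : a ≤ b) (ha : 0 < a) :
    ∫ u in Ioi 0, (Icc a b).indicator (fun _ => M) u = M * (b - a) := by
  rw [integral_indicator_const _ measurableSet_Icc, measureReal_restrict_apply measurableSet_Icc,
    inter_eq_left.2 ((Icc_subset_Ioi_iff hab).2 ha), volume_real_Icc_of_le hab, smul_eq_mul,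
    mul_comm]

lemma norm_integral_mul_erfcSeries_le {t : ℝ} (hl : ∀ n, 0 ≤ l n)
    (hs : Summable fun n => exp (-t * l n ^ 2)) (ha : 0 < a) (hab : a ≤ b)
    (hd : ∀ u, 0 < u → |d u| ≤ (Icc a b).indicator (fun _ => M) u) (ht : 0 < t) :
    ‖∫ u in Ioi 0, d u * erfcSeries l t u‖ ≤
      M * (b - a) * (exp (-a ^ 2 / t) * heatTrace l t) := by
  have hdom := (integrableOn_indicator_Icc_const a b M).mul_const
    (exp (-a ^ 2 / t) * heatTrace l t)
  refine (norm_integral_le_of_norm_le hdom ?_).trans_eq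
    (by rw [integral_mul_const, integral_indicator_Icc_const_Ioi hab ha])
  filter_upwards [ae_restrict_mem measurableSet_Ioi] with u hu
  exact norm_mul_erfcSeries_le hl hs ha.le (hd u hu) ht hu

lemma norm_integral_rpow_mul_integral_le (hl : ∀ n, 0 ≤ l n)
    (hs : ∀ t, 0 < t → Summable fun n => exp (-t * l n ^ 2)) (ha : 0 < a) (hab : a ≤ b)
    (hd : ∀ u, 0 < u → |d u| ≤ (Icc a b).indicator (fun _ => M) u)
    (hint : IntegrableOn (fun t => t ^ (s - 1) * exp (-a ^ 2 / t) * heatTrace l t) (Ioi 0)) :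
    ‖∫ t in Ioi 0, t ^ (s - 1) * ∫ u in Ioi 0, d u * erfcSeries l t u‖ ≤
      M * (b - a) * ∫ t in Ioi 0, t ^ (s - 1) * exp (-a ^ 2 / t) * heatTrace l t := by
  refine (norm_integral_le_of_norm_le (hint.const_mul (M * (b - a))) ?_).trans_eq
    (integral_const_mul _ _)
  filter_upwards [ae_restrict_mem measurableSet_Ioi] with t (ht : 0 < t)
  rw [norm_mul, norm_of_nonneg (rpow_nonneg ht.le _)]
  calc t ^ (s - 1) * ‖∫ u in Ioi 0, d u * erfcSeries l t u‖
      ≤ t ^ (s - 1) * (M * (b - a) * (exp (-a ^ 2 / t) * heatTrace l t)) := by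
        gcongr
        exact norm_integral_mul_erfcSeries_le hl (hs t ht) ha hab hd ht
    _ = _ := by ring

end DoubleIntegral

theorem stmt8_general (l : ℕ → ℝ) (hl0 : 0 < l 0) (hl : ∀ n, l 0 ≤ l n)
    (hsum : ∀ t : ℝ, 0 < t → Summable fun n => Real.exp (-t * (l n)^2))
    (C k : ℝ)
    (hΘ : ∀ t : ℝ, 0 < t → t ≤ 1 → (∑' n, Real.exp (-t * (l n)^2)) ≤ C * t ^ (-k))
    (c : ℝ)
    (φ : ℝ → ℝ → ℝ)
    (hφ1 : ∀ R : ℝ, 0 < R → ∀ u : ℝ, 0 ≤ u → u ≤ R → φ R u = 1)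
    (hφ0 : ∀ R : ℝ, 0 < R → ∀ u : ℝ, 2*R ≤ u → φ R u = 0)
    (hφ' : ∀ R : ℝ, 0 < R → ∀ u : ℝ, 0 ≤ u → |derivWithin (φ R) (Set.Ici 0) u| ≤ c/R)
    (s : ℝ) :
    (∀ R : ℝ, 0 < R → IntegrableOn
        (fun p : ℝ × ℝ => p.1 ^ (s-1) * (derivWithin (φ R) (Set.Ici 0) p.2 *
            ∑' n, Real.exp (2 * l n * p.2) * erfc (p.2 / Real.sqrt p.1 + l n * Real.sqrt p.1)))
        (Set.Ioi 0 ×ˢ Set.Ioi 0)) ∧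
    Tendsto (fun R : ℝ => (1/2) * ∫ t in Set.Ioi (0:ℝ), t ^ (s-1) *
        ∫ u in Set.Ioi (0:ℝ), derivWithin (φ R) (Set.Ici 0) u *
          ∑' n, Real.exp (2 * l n * u) * erfc (u / Real.sqrt t + l n * Real.sqrt t))
      atTop (nhds 0) := by
  have hl_nonneg : ∀ n, 0 ≤ l n := fun n => (hl0.trans_le (hl n)).le
  have hint : ∀ a, 0 < a →
      IntegrableOn (fun t => t ^ (s - 1) * exp (-a / t) * heatTrace l t) (Ioi 0) :=
    fun a ha => integrableOn_rpow_mul_exp_neg_div_mul_heatTrace hl0 hl hsum hΘ ha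
  have hd : ∀ R, 0 < R → ∀ u, 0 < u →
      |derivWithin (φ R) (Ici 0) u| ≤ (Icc R (2 * R)).indicator (fun _ => c / R) u :=
    fun R hR _ => abs_derivWithin_Ici_le_indicator (hφ1 R hR) (hφ0 R hR) (hφ' R hR)
  refine ⟨fun R hR => integrableOn_rpow_mul_mul_erfcSeries hl_nonneg hsum hR.le
    (aestronglyMeasurable_derivWithin_Ici_restrict_Ioi _ 0) (hd R hR)
    (hint _ (by positivity)), ?_⟩
  have hlim := ((tendsto_integral_rpow_mul_exp_neg_div_mul (fun t _ => heatTrace_nonneg l t)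
    hint).comp (tendsto_pow_atTop two_ne_zero)).const_mul (1 / 2 * c)
  rw [mul_zero] at hlim
  refine squeeze_zero_norm' ?_ hlim
  filter_upwards [eventually_gt_atTop 0] with R hR
  calc _ ≤ 1 / 2 * (c / R * (2 * R - R) *
        ∫ t in Ioi 0, t ^ (s - 1) * exp (-R ^ 2 / t) * heatTrace l t) := by
        rw [norm_mul, norm_of_nonneg (by norm_num : (0 : ℝ) ≤ 1 / 2)]
        exact mul_le_mul_of_nonneg_left (norm_integral_rpow_mul_integral_le hl_nonneg hsum hR
          (by linarith) (hd R hR) (hint _ (by positivity))) (by norm_num)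
    _ = _ := by
        simp only [Function.comp_apply]
        field_simp
        ring

/-- Proposition 2.1. Let `(λ_n)` be positive reals bounded below by `λ_0 > 0` with
`Θ(t) = Σ_n e^{−tλ_n²}` convergent for all `t > 0` and `Θ(t) ≤ C t^{−k}` for `0 < t ≤ 1`.
Let `c > 0` and for each `R > 0` let `φ_R : [0,∞) → [0,1]` be `C¹` with `φ_R = 1` on `[0,R]`,
`φ_R = 0` on `[2R,∞)` and `|φ_R′| ≤ c/R`. Then for every real `s` the double integral
`T₂(s,R) = (1/2) ∫_0^∞ t^{s−1} ∫_0^∞ φ_R′(u) Σ_n e^{2λ_n u} erfc(u/√t + λ_n√t) du dt`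
converges absolutely and `lim_{R→∞} T₂(s,R) = 0`. -/
theorem stmt8 (l : ℕ → ℝ) (hl0 : 0 < l 0) (hl : ∀ n, l 0 ≤ l n)
    (hsum : ∀ t : ℝ, 0 < t → Summable fun n => Real.exp (-t * (l n)^2))
    (C k : ℝ) (hC : 0 < C) (hk : 0 < k)
    (hΘ : ∀ t : ℝ, 0 < t → t ≤ 1 → (∑' n, Real.exp (-t * (l n)^2)) ≤ C * t ^ (-k))
    (c : ℝ) (hc : 0 < c)
    (φ : ℝ → ℝ → ℝ)
    (hφC1 : ∀ R : ℝ, 0 < R → ContDiffOn ℝ 1 (φ R) (Set.Ici 0))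
    (hφ01 : ∀ R : ℝ, 0 < R → ∀ u : ℝ, 0 ≤ u → φ R u ∈ Set.Icc (0:ℝ) 1)
    (hφ1 : ∀ R : ℝ, 0 < R → ∀ u : ℝ, 0 ≤ u → u ≤ R → φ R u = 1)
    (hφ0 : ∀ R : ℝ, 0 < R → ∀ u : ℝ, 2*R ≤ u → φ R u = 0)
    (hφ' : ∀ R : ℝ, 0 < R → ∀ u : ℝ, 0 ≤ u → |derivWithin (φ R) (Set.Ici 0) u| ≤ c/R)
    (s : ℝ) :
    (∀ R : ℝ, 0 < R → IntegrableOn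
        (fun p : ℝ × ℝ => p.1 ^ (s-1) * (derivWithin (φ R) (Set.Ici 0) p.2 *
            ∑' n, Real.exp (2 * l n * p.2) * erfc (p.2 / Real.sqrt p.1 + l n * Real.sqrt p.1)))
        (Set.Ioi 0 ×ˢ Set.Ioi 0)) ∧
    Tendsto (fun R : ℝ => (1/2) * ∫ t in Set.Ioi (0:ℝ), t ^ (s-1) *
        ∫ u in Set.Ioi (0:ℝ), derivWithin (φ R) (Set.Ici 0) u *
          ∑' n, Real.exp (2 * l n * u) * erfc (u / Real.sqrt t + l n * Real.sqrt t))
      atTop (nhds 0) :=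
  stmt8_general l hl0 hl hsum C k hΘ c φ hφ1 hφ0 hφ' s
end
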